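/- For any quiver D with at least one vertex, the canonical inclusion j_D of D into its loading L(D) (sending each vertex to itself and each edge e to (0,e)) is a mono-essential monomorphism into a loaded quiver; hence L(D) with j_D is a mono-injective envelope of D. -/

import Mathlib

open CategoryTheory

/-- A quiver (directed multigraph): vertices, edges, source and target maps. -/
structure Quiv' where
  V : Type
  E : Type
  s : E → V
  t : E → V

/-- A quiver homomorphism: a vertex map and an edge map commuting with source/target. -/
@[ext]
structure QuivHom (G H : Quiv') where
  vMap : G.V → H.V
  eMap : G.E → H.E
  comm_s : ∀ e, vMap (G.s e) = H.s (eMap e)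
  comm_t : ∀ e, vMap (G.t e) = H.t (eMap e)

def QuivHom.id' (G : Quiv') : QuivHom G G where
  vMap := id
  eMap := id
  comm_s _ := rfl
  comm_t _ := rfl

def QuivHom.comp' {G H K : Quiv'} (f : QuivHom G H) (g : QuivHom H K) : QuivHom G K where
  vMap := g.vMap ∘ f.vMap
  eMap := g.eMap ∘ f.eMap
  comm_s e := by simp only [Function.comp_apply, f.comm_s, g.comm_s]
  comm_t e := by simp only [Function.comp_apply, f.comm_t, g.comm_t]

instance : Category Quiv' where
  Hom := QuivHom
  id := QuivHom.id'
  comp := QuivHom.comp'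
  id_comp f := rfl
  comp_id f := rfl
  assoc f g h := rfl

/-- `I(S)`: the empty quiver (independent set of vertices) on `S`. -/
def IQ (S : Type) : Quiv' := ⟨S, Empty, Empty.elim, Empty.elim⟩

/-- `M(S)`: the independent set of edges on `S`. -/
def MQ (S : Type) : Quiv' := ⟨Fin 2 × S, S, fun x => (0, x), fun x => (1, x)⟩

/-- `K(S)`: the complete (full) quiver on `S`. -/
def KQ (S : Type) : Quiv' := ⟨S, S × S, Prod.fst, Prod.snd⟩

/-- `B(S)`: the bouquet on `S`. -/
def BQ (S : Type) : Quiv' := ⟨PUnit, S, fun _ => PUnit.unit, fun _ => PUnit.unit⟩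

/-- The vertex functor `V : Quiv → Set`. -/
def Vf : Quiv' ⥤ Type where
  obj G := G.V
  map φ := TypeCat.ofHom φ.vMap
  map_id _ := rfl
  map_comp _ _ := rfl

/-- The edge functor `E : Quiv → Set`. -/
def Ef : Quiv' ⥤ Type where
  obj G := G.E
  map φ := TypeCat.ofHom φ.eMap
  map_id _ := rfl
  map_comp _ _ := rfl

/-- The empty-quiver functor `I : Set → Quiv`. -/
def If : Type ⥤ Quiv' where
  obj := IQ
  map f := ⟨f, id, fun e => e.elim, fun e => e.elim⟩
  map_id _ := rfl
  map_comp _ _ := rfl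

/-- The independent-edges functor `M : Set → Quiv`. -/
def Mf : Type ⥤ Quiv' where
  obj := MQ
  map f := ⟨Prod.map id f, f, fun _ => rfl, fun _ => rfl⟩
  map_id _ := rfl
  map_comp _ _ := rfl

/-- The complete-quiver functor `K : Set → Quiv`. -/
def Kf : Type ⥤ Quiv' where
  obj := KQ
  map f := ⟨f, Prod.map f f, fun _ => rfl, fun _ => rfl⟩
  map_id _ := rfl
  map_comp _ _ := rfl

/-- The bouquet functor `B : Set → Quiv`. -/
def Bf : Type ⥤ Quiv' where
  obj := BQ
  map f := ⟨id, f, fun _ => rfl, fun _ => rfl⟩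
  map_id _ := rfl
  map_comp _ _ := rfl

/-- The set of edges of `G` with source `v` and target `w`. -/
def edgesBetween (G : Quiv') (v w : G.V) : Set G.E := {e | G.s e = v ∧ G.t e = w}

/-- A quiver is loaded if between any two vertices there is an edge. -/
def Loaded (J : Quiv') : Prop := ∀ v w : J.V, ∃ e : J.E, J.s e = v ∧ J.t e = w

/-- `J` is injective with respect to the morphism `φ`. -/
def InjectiveWrt (J : Quiv') {A B : Quiv'} (φ : A ⟶ B) : Prop :=
  ∀ ψ : A ⟶ J, ∃ ψ' : B ⟶ J, φ ≫ ψ' = ψ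

/-- `J` is injective with respect to all monomorphisms. -/
def MonoInjective (J : Quiv') : Prop :=
  ∀ ⦃A B : Quiv'⦄ (φ : A ⟶ B), Mono φ → ∀ ψ : A ⟶ J, ∃ ψ' : B ⟶ J, φ ≫ ψ' = ψ

/-- A monomorphism `φ` is mono-essential if composing with it reflects monicity. -/
def MonoEssential {D C : Quiv'} (φ : D ⟶ C) : Prop :=
  Mono φ ∧ ∀ ⦃A : Quiv'⦄ (α : C ⟶ A), Mono (φ ≫ α) → Mono α

/-- `P` is projective with respect to all epimorphisms. -/
def EpiProjective (P : Quiv') : Prop :=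
  ∀ ⦃A B : Quiv'⦄ (φ : A ⟶ B), Epi φ → ∀ ψ : P ⟶ B, ∃ γ : P ⟶ A, γ ≫ φ = ψ

/-- An epimorphism `φ` is epi-coessential if composing with it reflects epicity. -/
def EpiCoessential {G H : Quiv'} (φ : G ⟶ H) : Prop :=
  Epi φ ∧ ∀ ⦃A : Quiv'⦄ (α : A ⟶ G), Epi (α ≫ φ) → Epi α

/-- Disjoint union of two quivers. -/
def DU (G H : Quiv') : Quiv' :=
  ⟨G.V ⊕ H.V, G.E ⊕ H.E, Sum.map G.s H.s, Sum.map G.t H.t⟩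

/-- The loading of a quiver: add one edge between each pair of vertices having none. -/
def Loading (D : Quiv') : Quiv' where
  V := D.V
  E := D.E ⊕ {p : D.V × D.V // edgesBetween D p.1 p.2 = ∅}
  s := Sum.elim D.s (fun p => p.val.1)
  t := Sum.elim D.t (fun p => p.val.2)

/-- The canonical inclusion of a quiver into its loading. -/
def loadInc (D : Quiv') : D ⟶ Loading D where
  vMap := id
  eMap := Sum.inl
  comm_s _ := rfl
  comm_t _ := rfl

/-- A vertex is independent if it is incident to no edge. -/
def Indep (G : Quiv') (v : G.V) : Prop := (∀ e, G.s e ≠ v) ∧ (∀ e, G.t e ≠ v)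

/-- The explosion of a quiver `G`: `I(indep G) ⊔ M(E(G))`. -/
def Explosion (G : Quiv') : Quiv' := DU (IQ {v : G.V // Indep G v}) (MQ G.E)

/-- The covering map from the explosion of `G` onto `G`. -/
def coverMap (G : Quiv') : Explosion G ⟶ G where
  vMap := Sum.elim Subtype.val (fun p => if p.1 = 0 then G.s p.2 else G.t p.2)
  eMap := Sum.elim Empty.elim id
  comm_s e := by
    cases e with
    | inl e => exact e.elim
    | inr e => rfl
  comm_t e := by
    cases e with
    | inl e => exact e.elim
    | inr e => rfl

namespace QuivHom

variable {G H : Quiv'}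

def vertex (v : G.V) : IQ PUnit ⟶ G where
  vMap _ := v
  eMap := Empty.elim
  comm_s e := e.elim
  comm_t e := e.elim

def edge (e : G.E) : MQ PUnit ⟶ G where
  vMap p := ![G.s e, G.t e] p.1
  eMap _ := e
  comm_s _ := rfl
  comm_t _ := rfl

lemma vertex_comp (v : G.V) (φ : G ⟶ H) : vertex v ≫ φ = vertex (φ.vMap v) :=
  QuivHom.ext rfl (funext fun e => e.elim)

lemma edge_comp (e : G.E) (φ : G ⟶ H) : edge e ≫ φ = edge (φ.eMap e) := by
  refine QuivHom.ext (funext fun p => ?_) rfl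
  obtain ⟨i, _⟩ := p
  fin_cases i
  · exact φ.comm_s e
  · exact φ.comm_t e

/-- `vertex` and `edge` represent the vertex and edge functors, so monomorphisms are detected on
them. -/
lemma mono_iff_injective (φ : G ⟶ H) :
    Mono φ ↔ Function.Injective φ.vMap ∧ Function.Injective φ.eMap := by
  refine ⟨fun hφ => ⟨fun v w h => ?_, fun e₁ e₂ h => ?_⟩, fun ⟨hv, he⟩ => ⟨fun f g h => ?_⟩⟩
  · have := hφ.right_cancellation (vertex v) (vertex w) (by rw [vertex_comp, vertex_comp, h])
    exact congrFun (congrArg QuivHom.vMap this) PUnit.unit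
  · have := hφ.right_cancellation (edge e₁) (edge e₂) (by rw [edge_comp, edge_comp, h])
    exact congrFun (congrArg QuivHom.eMap this) PUnit.unit
  · exact QuivHom.ext (hv.comp_left (congrArg QuivHom.vMap h))
      (he.comp_left (congrArg QuivHom.eMap h))

end QuivHom

lemma loaded_loading (D : Quiv') : Loaded (Loading D) := by
  intro v w
  by_cases h : edgesBetween D v w = ∅
  · exact ⟨Sum.inr ⟨(v, w), h⟩, rfl, rfl⟩
  · obtain ⟨e, he⟩ := Set.nonempty_iff_ne_empty.mpr h
    exact ⟨Sum.inl e, he⟩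

/-- An added edge of `Loading D` is the only edge between its endpoints, so a map on edges that
separates endpoints is injective as soon as it is injective on the edges of `D`. -/
lemma Loading.injective_of_injective_comp_inl {D : Quiv'} {X : Type*} {f : (Loading D).E → X}
    (hf : Function.Injective (f ∘ Sum.inl))
    (hends : ∀ e₁ e₂, f e₁ = f e₂ →
      (Loading D).s e₁ = (Loading D).s e₂ ∧ (Loading D).t e₁ = (Loading D).t e₂) :
    Function.Injective f := by
  have not_parallel : ∀ (a : D.E) (p : {p : D.V × D.V // edgesBetween D p.1 p.2 = ∅}),
      ¬(D.s a = p.val.1 ∧ D.t a = p.val.2) := fun a p h =>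
    (Set.eq_empty_iff_forall_notMem.mp p.2 a) h
  rintro (a | p) (b | q) h
  · exact congrArg Sum.inl (hf h)
  · exact (not_parallel a q (hends _ _ h)).elim
  · exact (not_parallel b p (hends _ _ h.symm)).elim
  · obtain ⟨hs, ht⟩ := hends _ _ h
    exact congrArg Sum.inr (Subtype.ext (Prod.ext hs ht))

lemma mono_loadInc (D : Quiv') : Mono (loadInc D) :=
  (QuivHom.mono_iff_injective _).mpr ⟨Function.injective_id, Sum.inl_injective⟩

lemma monoEssential_loadInc (D : Quiv') : MonoEssential (loadInc D) := by
  refine ⟨mono_loadInc D, fun A α hmono => ?_⟩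
  obtain ⟨hv, he⟩ := (QuivHom.mono_iff_injective _).mp hmono
  change Function.Injective α.vMap at hv
  change Function.Injective (α.eMap ∘ Sum.inl) at he
  refine (QuivHom.mono_iff_injective α).mpr ⟨hv, Loading.injective_of_injective_comp_inl he ?_⟩
  intro e₁ e₂ h
  exact ⟨hv (by rw [α.comm_s, α.comm_s, h]), hv (by rw [α.comm_t, α.comm_t, h])⟩

/-- Extend `ψ` along the injective `φ` by sending new vertices to a fixed vertex and each new
edge to some edge between the images of its endpoints, which exists because `J` is loaded. -/
lemma Loaded.monoInjective {J : Quiv'} (hJ : Loaded J) (hV : Nonempty J.V) : MonoInjective J := by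
  intro A B φ hφ ψ
  obtain ⟨hv, he⟩ := (QuivHom.mono_iff_injective φ).mp hφ
  let vExt : B.V → J.V := Function.extend φ.vMap ψ.vMap fun _ => hV.some
  let newEdge (e : B.E) : J.E := (hJ (vExt (B.s e)) (vExt (B.t e))).choose
  let eExt : B.E → J.E := Function.extend φ.eMap ψ.eMap newEdge
  have comm (src : ∀ G : Quiv', G.E → G.V) (hφsrc : ∀ e, φ.vMap (src A e) = src B (φ.eMap e))
      (hψsrc : ∀ e, ψ.vMap (src A e) = src J (ψ.eMap e))
      (hnew : ∀ e, src J (newEdge e) = vExt (src B e)) (e : B.E) :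
      vExt (src B e) = src J (eExt e) := by
    by_cases h : ∃ a, φ.eMap a = e
    · obtain ⟨a, rfl⟩ := h
      rw [← hφsrc]
      dsimp only [vExt, eExt]
      rw [hv.extend_apply, he.extend_apply, hψsrc]
    · dsimp only [eExt]
      rw [Function.extend_apply' _ _ _ h, hnew]
  refine ⟨⟨vExt, eExt, comm Quiv'.s φ.comm_s ψ.comm_s fun e => ?_,
    comm Quiv'.t φ.comm_t ψ.comm_t fun e => ?_⟩, ?_⟩
  · exact (hJ _ _).choose_spec.1
  · exact (hJ _ _).choose_spec.2
  · exact QuivHom.ext (funext fun a => hv.extend_apply ψ.vMap (fun _ => hV.some) a)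
      (funext fun a => he.extend_apply ψ.eMap newEdge a)

theorem loading_is_injective_envelope (D : Quiv') (hD : Nonempty D.V) :
    CategoryTheory.Mono (loadInc D) ∧ MonoEssential (loadInc D) ∧
      Loaded (Loading D) ∧ MonoInjective (Loading D) :=
  ⟨mono_loadInc D, monoEssential_loadInc D, loaded_loading D, (loaded_loading D).monoInjective hD⟩
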